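/- arXiv:2204.02971 — 3 statements merged into one kernel-verified Lean document; each statement's English description precedes it below -/
import Mathlib

section
/- Suppose a, c, d, m are positive integers with m² = a·c, a/m > 2/3, d divides c with c/d = k odd, b' = 2d satisfies m − a ≤ b' ≤ c − m, gcd(a,d) = 1, a ≥ d ≥ gcd(b'+a, c), and a + d + gcd(b'+a, c) = m. Then c − 2m + a < 18. -/
/-!
With `g = gcd(2d + a, c)` and `s = c - 2m + a`, the relation `m² = ac` reads `a s = (m - a)² = (d + g)²`.
Since `a > 2(m - a)`, this forces `0 < 2s < d + g`, and `2d ≤ c - m` gives `d - g ≤ s`, so `0 < s < 2g`.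
As `g ∣ s`, we get `s = g`; then `g` is coprime to `d` (it divides `2d + a`) and divides `d²`, so `s = g = 1`.
-/

theorem eq_of_dvd_of_pos_of_lt_two_mul {s g : ℤ} (hs : 0 < s) (hdvd : g ∣ s) (hlt : s < 2 * g) :
    s = g := by
  obtain ⟨q, rfl⟩ := hdvd
  have hg : 0 < g := by linarith
  have hq_pos : 0 < q := pos_of_mul_pos_right hs hg.le
  have hq_lt : q < 2 := lt_of_mul_lt_mul_left (by linarith) hg.le
  obtain rfl : q = 1 := by omega
  exact mul_one g

section OrderedRing

variable {R : Type*} [CommRing R] [LinearOrder R] [IsStrictOrderedRing R] {a s t : R}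

theorem pos_of_mul_eq_sq (ha : 0 < a) (ht : 0 < t) (h : a * s = t ^ 2) : 0 < s :=
  pos_of_mul_pos_right (h ▸ pow_pos ht 2) ha.le

theorem two_mul_lt_of_mul_eq_sq (ht : 0 < t) (hat : 2 * t < a) (h : a * s = t ^ 2) :
    2 * s < t :=
  lt_of_mul_lt_mul_left (a := a) (by nlinarith) (by linarith)

end OrderedRing

theorem IsCoprime.isUnit_of_mul_eq_add_sq {R : Type*} [CommRing R] {a d s : R}
    (h : IsCoprime s d) (heq : a * s = (d + s) ^ 2) : IsUnit s :=
  (h.pow_right (n := 2)).isUnit_of_dvd' dvd_rfl ⟨a - 2 * d - s, by linear_combination -heq⟩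

theorem case1_upper_bound_general
    (a c d m : ℤ) (ha : 0 < a) (hd : 0 < d)
    (harea : m ^ 2 = a * c)
    (hratio : 3 * a > 2 * m)
    (hb2 : 2 * d ≤ c - m)
    (hcop : IsCoprime a d)
    (hsum : a + d + (Int.gcd (2 * d + a) c : ℤ) = m) :
    c - 2 * m + a < 18 := by
  set g : ℤ := (Int.gcd (2 * d + a) c : ℤ)
  have hg_dvd : g ∣ 2 * d + a := Int.gcd_dvd_left _ _
  have hexcess : a * (c - 2 * m + a) = (d + g) ^ 2 := by
    rw [show d + g = m - a by linarith]
    linear_combination -harea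
  have hdg : 0 < d + g := by positivity
  have hs_pos := pos_of_mul_eq_sq ha hdg hexcess
  have hs_lt := two_mul_lt_of_mul_eq_sq hdg (by linarith) hexcess
  have hs_eq : c - 2 * m + a = g := by
    refine eq_of_dvd_of_pos_of_lt_two_mul hs_pos ?_ (by linarith)
    rw [show c - 2 * m + a = c - (2 * d + a) - g * 2 by linarith]
    exact dvd_sub (dvd_sub (Int.gcd_dvd_right _ _) hg_dvd) (dvd_mul_right g 2)
  have hgd : IsCoprime g d := (hcop.mul_add_right_left 2).of_isCoprime_of_dvd_left hg_dvd
  rw [hs_eq] at hexcess ⊢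
  rcases Int.isUnit_iff.mp (hgd.isUnit_of_mul_eq_add_sq hexcess) with h | h <;> omega

/-- Case 1 of Theorem 2.4: under the listed conditions with a/m > 2/3, one
obtains the upper bound c − 2m + a < 18. -/
theorem case1_upper_bound
    (a c d m k : ℤ) (ha : 0 < a) (hc : 0 < c) (hd : 0 < d) (hm : 0 < m)
    (harea : m ^ 2 = a * c)
    (hratio : 3 * a > 2 * m)
    (hk : c = k * d) (hkodd : Odd k)
    (hb1 : m - a ≤ 2 * d) (hb2 : 2 * d ≤ c - m)
    (hcop : IsCoprime a d)
    (hord1 : d ≤ a) (hord2 : (Int.gcd (2 * d + a) c : ℤ) ≤ d)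
    (hsum : a + d + (Int.gcd (2 * d + a) c : ℤ) = m) :
    c - 2 * m + a < 18 :=
  case1_upper_bound_general a c d m ha hd harea hratio hb2 hcop hsum
end

section
/- Let k ≥ 4 be an integer and a, x positive integers. If the quadratic equation m² = k·a·(m − a − x) has a real solution m with 3 ≤ 2m/a < 4, then k > 4 and a ≤ 4kx/(2k − 9). -/
/-!
Put `u = 2m/a`. The equation reads `u² − 2ku + 4k + 4kx/a = 0`. For `k = 4` this is
`(u − 4)² + 16x/a = 0`, impossible for `x/a > 0`, so `k ≥ 5`. In general
`4kx/a − (2k − 9) = (u − 3)(2k − 3 − u)`, which is nonnegative on `3 ≤ u ≤ 2k − 3`,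
an interval containing `[3, 4)`.
-/

theorem four_mul_mul_sub_eq_of_sq_eq {R : Type*} [CommRing R] {k a x m : R}
    (heq : m ^ 2 = k * a * (m - a - x)) :
    4 * k * a * x - (2 * k - 9) * a ^ 2 = (2 * m - 3 * a) * ((2 * k - 3) * a - 2 * m) := by
  linear_combination 4 * heq

section OrderedField

variable {K : Type*} [Field K] [LinearOrder K] [IsStrictOrderedRing K]

theorem sq_ne_four_mul_mul_sub {a x : K} (ha : 0 < a) (hx : 0 < x) (m : K) :
    m ^ 2 ≠ 4 * a * (m - a - x) := by
  intro heq
  have hsq : (m - 2 * a) ^ 2 = -(4 * a * x) := by linear_combination heq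
  linarith [sq_nonneg (m - 2 * a), mul_pos ha hx]

theorem two_mul_sub_nine_mul_le_of_sq_eq {k a x m : K} (heq : m ^ 2 = k * a * (m - a - x))
    (ha : 0 < a) (hlo : 3 * a ≤ 2 * m) (hhi : 2 * m ≤ (2 * k - 3) * a) :
    (2 * k - 9) * a ≤ 4 * k * x := by
  have hprod : 0 ≤ (2 * m - 3 * a) * ((2 * k - 3) * a - 2 * m) :=
    mul_nonneg (sub_nonneg.mpr hlo) (sub_nonneg.mpr hhi)
  rw [← four_mul_mul_sub_eq_of_sq_eq heq] at hprod
  refine le_of_mul_le_mul_left ?_ ha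
  linear_combination hprod

end OrderedField

/-- Case 2 of Theorem 2.4: if m² = k·a·(m − a − x) has a real solution m
with 3 ≤ 2m/a < 4 (where k ≥ 4, a, x positive integers), then k > 4 and
a ≤ 4kx/(2k − 9). -/
theorem case2_bound_on_a
    (k : ℤ) (hk : 4 ≤ k) (a x : ℤ) (ha : 0 < a) (hx : 0 < x)
    (m : ℝ)
    (heq : m ^ 2 = (k : ℝ) * a * (m - a - x))
    (hlo : 3 ≤ 2 * m / a) (hhi : 2 * m / a < 4) :
    4 < k ∧ (a : ℝ) ≤ 4 * k * x / (2 * k - 9) := by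
  have haR : (0 : ℝ) < a := by exact_mod_cast ha
  have hk4 : 4 < k := by
    refine lt_of_le_of_ne hk fun hk4 => ?_
    subst hk4
    exact sq_ne_four_mul_mul_sub haR (Int.cast_pos.mpr hx) m (by exact_mod_cast heq)
  have hk5 : (5 : ℝ) ≤ k := by exact_mod_cast hk4
  have hlo' : 3 * (a : ℝ) ≤ 2 * m := (le_div_iff₀ haR).mp hlo
  have hhi' : 2 * m ≤ (2 * k - 3) * (a : ℝ) := by
    nlinarith [(div_lt_iff₀ haR).mp hhi]
  refine ⟨hk4, ?_⟩
  rw [le_div_iff₀ (by linarith), mul_comm]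
  exact two_mul_sub_nine_mul_le_of_sq_eq heq haR hlo' hhi'
end

section
/- For the triangle Δ with vertices (0,0), (2,0), (5,8): for every primitive vector λ = (u,v) ∈ ℤ², the width of Δ along λ is at least 4, and the width along (2,−1) equals 4. -/
/-- The triangle with vertices (0,0), (2,0), (5,8) as a subset of ℝ². -/
noncomputable def triangleDelta : Set (ℝ × ℝ) :=
  convexHull ℝ {(0, 0), (2, 0), (5, 8)}

/-- The width of the triangle along the direction (u, v). -/
noncomputable def widthAlong (u v : ℝ) : ℝ :=
  sSup ((fun p : ℝ × ℝ => p.1 * u + p.2 * v) '' triangleDelta) -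
    sInf ((fun p : ℝ × ℝ => p.1 * u + p.2 * v) '' triangleDelta)

/-!
The linear form `p ↦ ⟨p, λ⟩` maps the triangle onto the convex hull of the values at its
vertices, so the width along `λ` is the diameter of `{0, ⟨(2,0), λ⟩, ⟨(5,8), λ⟩}`, that is the
largest of `|⟨e, λ⟩|` over the edge vectors `e = (2,0), (5,8), (3,8)`. If all three were below
`4` for `λ = (u, v)`, then `|u| ≤ 1`; `u = 0` forces `v = 0`, and `u = ±1` leaves no room for
both `5u + 8v` and `3u + 8v` in `(-4, 4)`.
-/

theorem isLinearMap_fst_mul_add_snd_mul (u v : ℝ) :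
    IsLinearMap ℝ (fun p : ℝ × ℝ => p.1 * u + p.2 * v) where
  map_add x y := by simp only [Prod.fst_add, Prod.snd_add]; ring
  map_smul c x := by simp only [Prod.smul_fst, Prod.smul_snd, smul_eq_mul]; ring

theorem sSup_sub_sInf_image_convexHull {E : Type*} [AddCommGroup E] [Module ℝ E] {f : E → ℝ}
    (hf : IsLinearMap ℝ f) {s : Set E} (hs : s.Finite) :
    sSup (f '' convexHull ℝ s) - sInf (f '' convexHull ℝ s) = Metric.diam (f '' s) := by
  have hbounded : Bornology.IsBounded (convexHull ℝ (f '' s)) :=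
    ((hs.image f).isCompact_convexHull ℝ).isBounded
  rw [hf.image_convexHull, ← Real.diam_eq hbounded, convexHull_diam]

theorem widthAlong_eq_diam (u v : ℝ) :
    widthAlong u v = Metric.diam ({0, 2 * u, 5 * u + 8 * v} : Set ℝ) := by
  rw [widthAlong, triangleDelta,
    sSup_sub_sInf_image_convexHull (isLinearMap_fst_mul_add_snd_mul u v) (Set.toFinite _)]
  simp only [Set.image_insert_eq, Set.image_singleton]
  norm_num

theorem widthAlong_eq_max_abs (u v : ℝ) :
    widthAlong u v = max (max |2 * u| |5 * u + 8 * v|) |3 * u + 8 * v| := by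
  rw [widthAlong_eq_diam, Metric.diam_triple, Real.dist_eq, Real.dist_eq, Real.dist_eq,
    zero_sub, zero_sub, abs_neg, abs_neg, abs_sub_comm]
  ring_nf

theorem four_le_max_abs_of_gcd_eq_one {u v : ℤ} (h : Int.gcd u v = 1) :
    4 ≤ max (max |2 * u| |5 * u + 8 * v|) |3 * u + 8 * v| := by
  have hne : ¬(u = 0 ∧ v = 0) := by
    rintro ⟨rfl, rfl⟩
    simp at h
  simp only [le_max_iff, le_abs']
  omega

/-- For every primitive vector (u,v) ∈ ℤ² the width of the triangle
(0,0), (2,0), (5,8) along (u,v) is at least 4, and the width along (2,−1)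
equals 4. -/
theorem width_of_triangle1 :
    (∀ u v : ℤ, Int.gcd u v = 1 → (4 : ℝ) ≤ widthAlong (u : ℝ) (v : ℝ)) ∧
    widthAlong 2 (-1) = 4 := by
  refine ⟨fun u v h => ?_, ?_⟩
  · rw [widthAlong_eq_max_abs]
    exact_mod_cast four_le_max_abs_of_gcd_eq_one h
  · rw [widthAlong_eq_max_abs]
    norm_num
end
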